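/- Let σ : A → A' be a linear map between algebras and extend it to the algebra homomorphism σ̃ : TA → A' from the tensor algebra determined by σ̃(a₁ ⊗ ⋯ ⊗ a_n) = σ(a₁)⋯σ(a_n). If I ⊆ A' is a two-sided ideal such that the curvature σ(ab) − σ(a)σ(b) ∈ I for all a, b ∈ A, then σ̃ maps the ideal JA = ker(TA → A) into I. -/
import Mathlib

/-- let `σ : A → A'` be a linear map, `σ̃ : TA → A'` its extension
to an algebra homomorphism on the non-unital tensor algebra `TA` (characterized
by its universal property), and `proj : TA → A` the canonical projection
(extending the identity of `A`), with `JA = ker proj`.  If `I ⊆ A'` is a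
two-sided ideal containing all curvatures `σ(ab) − σ(a)σ(b)`, then `σ̃` maps
`JA` into `I`. -/
theorem curvature_ideal_of_tensorAlgebra
    {A : Type} [NonUnitalRing A] [Module ℂ A]
    [SMulCommClass ℂ A A] [IsScalarTower ℂ A A]
    {A' : Type} [NonUnitalRing A'] [Module ℂ A']
    [SMulCommClass ℂ A' A'] [IsScalarTower ℂ A' A']
    {T : Type} [NonUnitalRing T] [Module ℂ T]
    [SMulCommClass ℂ T T] [IsScalarTower ℂ T T]
    (ι : A →ₗ[ℂ] T)
    (hTuniv : ∀ (B : Type) [NonUnitalRing B] [Module ℂ B]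
      [SMulCommClass ℂ B B] [IsScalarTower ℂ B B] (f : A →ₗ[ℂ] B),
      ∃! g : T →ₙₐ[ℂ] B, ∀ a : A, g (ι a) = f a)
    (proj : T →ₙₐ[ℂ] A) (hproj : ∀ a : A, proj (ι a) = a)
    (σ : A →ₗ[ℂ] A') (σext : T →ₙₐ[ℂ] A') (hσext : ∀ a : A, σext (ι a) = σ a)
    (I : Set A')
    (hI0 : (0 : A') ∈ I)
    (hIadd : ∀ u v : A', u ∈ I → v ∈ I → u + v ∈ I)
    (hIneg : ∀ u ∈ I, -u ∈ I)
    (hIsmul : ∀ (c : ℂ), ∀ u ∈ I, c • u ∈ I)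
    (hImul_left : ∀ r : A', ∀ u ∈ I, r * u ∈ I)
    (hImul_right : ∀ r : A', ∀ u ∈ I, u * r ∈ I)
    (hcurv : ∀ a b : A, σ (a * b) - σ a * σ b ∈ I) :
    ∀ x : T, proj x = 0 → σext x ∈ I := by
  -- The key claim: for all x, σext x - σ (proj x) ∈ I.
  -- The set of such x is a non-unital subalgebra containing ι(A), hence all of T.
  set S : NonUnitalSubalgebra ℂ T :=
    { carrier := {x : T | σext x - σ (proj x) ∈ I}
      zero_mem' := by simpa using hI0
      add_mem' := by
        intro x y hx hy
        have := hIadd _ _ hx hy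
        simpa [map_add, sub_add_sub_comm] using this
      smul_mem' := by
        intro c x hx
        have := hIsmul c _ hx
        simpa [map_smul, smul_sub] using this
      mul_mem' := by
        intro x y hx hy
        show σext (x * y) - σ (proj (x * y)) ∈ I
        have h1 : σext x * σext y - σ (proj x) * σ (proj y)
            = (σext x - σ (proj x)) * σext y
              + σ (proj x) * (σext y - σ (proj y)) := by
          rw [sub_mul, mul_sub]; abel
        have h2 : (σext x - σ (proj x)) * σext y ∈ I :=
          hImul_right _ _ hx
        have h3 : σ (proj x) * (σext y - σ (proj y)) ∈ I :=
          hImul_left _ _ hy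
        have h4 : σext x * σext y - σ (proj x) * σ (proj y) ∈ I := by
          rw [h1]; exact hIadd _ _ h2 h3
        have h5 : σ (proj x * proj y) - σ (proj x) * σ (proj y) ∈ I :=
          hcurv _ _
        have h6 := hIadd _ _ h4 (hIneg _ h5)
        have heq : σext (x * y) - σ (proj (x * y))
            = σext x * σext y - σ (proj x) * σ (proj y)
              + -(σ (proj x * proj y) - σ (proj x) * σ (proj y)) := by
          simp only [map_mul]; abel
        rw [heq]; exact h6 }
  have hmem : ∀ x : T, x ∈ S := by
    -- map A → S
    have hιS : ∀ a : A, ι a ∈ S := by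
      intro a
      show σext (ι a) - σ (proj (ι a)) ∈ I
      rw [hσext, hproj, sub_self]; exact hI0
    let f : A →ₗ[ℂ] S :=
      { toFun := fun a => ⟨ι a, hιS a⟩
        map_add' := fun a b => Subtype.ext (by simp)
        map_smul' := fun c a => Subtype.ext (by simp) }
    obtain ⟨g, hg, -⟩ := hTuniv S f
    obtain ⟨g0, -, hgu0⟩ := hTuniv T ι
    have h1 : (NonUnitalSubalgebraClass.subtype S).comp g = g0 :=
      hgu0 _ (fun a => by simp [hg a, f])
    have h2 : NonUnitalAlgHom.id ℂ T = g0 := hgu0 _ (fun a => rfl)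
    intro x
    have : ((NonUnitalSubalgebraClass.subtype S).comp g) x
        = (NonUnitalAlgHom.id ℂ T) x := by rw [h1, h2]
    have hx : (g x : T) = x := this
    rw [← hx]; exact (g x).2
  intro x hx
  have h : σext x - σ (proj x) ∈ I := hmem x
  rw [hx, map_zero, sub_zero] at h
  exact h
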